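/- Let q ≥ 1 and n₁,…,n_q be positive integers, and let P be the polynomial ring over 𝔽₂ = ℤ/2 in the indeterminates β_i^{(p)} for 1 ≤ p ≤ q and 1 ≤ i ≤ ⌊n_p/2⌋. With the conventions β_0^{(p)} := 1, β_i^{(p)} := β_{n_p−i}^{(p)} for ⌊n_p/2⌋ < i ≤ n_p, and β_i^{(p)} := 0 for i < 0 or i > n_p, define μ_m := Σ_{a₁+⋯+a_q = m} β_{a₁}^{(1)}⋯β_{a_q}^{(q)} ∈ P and set N := n₁ + ⋯ + n_q. If the number k of indices p with n_p odd is even and k ≥ 2, then μ_{N/2} = 0 in P. -/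
import Mathlib


open MvPolynomial

/-- A sequence (given as a list) `a₁, …, aₙ` in a commutative ring `A` is `A`-regular if for
each `i`, `aᵢ` is not a zero divisor on `A ⧸ (a₁, …, a_{i-1})`. -/
def IsRegularSeq {A : Type*} [CommRing A] (l : List A) : Prop :=
  ∀ (i : ℕ) (h : i < l.length), ∀ x : A,
    l.get ⟨i, h⟩ * x ∈ Ideal.span {y | y ∈ l.take i} →
      x ∈ Ideal.span {y | y ∈ l.take i}

/-- The element `β_i^{(p)}` of the polynomial ring `P` over `𝔽₂` in the indeterminates
`β_i^{(p)}`, `1 ≤ p ≤ q`, `1 ≤ i ≤ ⌊n_p/2⌋`, with the conventions `β_0^{(p)} = 1`,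
`β_i^{(p)} = β_{n_p−i}^{(p)}` for `⌊n_p/2⌋ < i ≤ n_p`, and `β_i^{(p)} = 0` for `i > n_p`. -/
noncomputable def bb (q : ℕ) (n : Fin q → ℕ) (p : Fin q) (i : ℕ) :
    MvPolynomial (Σ p : Fin q, Fin (n p / 2)) (ZMod 2) :=
  if h : i ≤ n p then
    (if h1 : 1 ≤ min i (n p - i) then X ⟨p, ⟨min i (n p - i) - 1, by omega⟩⟩ else 1)
  else 0

/-- `μ_m := Σ_{a₁+⋯+a_q = m} β_{a₁}^{(1)} ⋯ β_{a_q}^{(q)}`. -/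
noncomputable def muP (q : ℕ) (n : Fin q → ℕ) (m : ℕ) :
    MvPolynomial (Σ p : Fin q, Fin (n p / 2)) (ZMod 2) :=
  ∑ a ∈ (Fintype.piFinset fun _ : Fin q => Finset.range (m + 1)).filter
      (fun a => ∑ p, a p = m),
    ∏ p, bb q n p (a p)

/-- `μ̃_m := μ_m + (binom(n₁+⋯+n_q, m) mod 2)`. -/
noncomputable def muTildeP (q : ℕ) (n : Fin q → ℕ) (m : ℕ) :
    MvPolynomial (Σ p : Fin q, Fin (n p / 2)) (ZMod 2) :=
  muP q n m + (Nat.choose (∑ p, n p) m : MvPolynomial (Σ p : Fin q, Fin (n p / 2)) (ZMod 2))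

lemma bb_symm (q : ℕ) (n : Fin q → ℕ) (p : Fin q) (i : ℕ) (h : i ≤ n p) :
    bb q n p (n p - i) = bb q n p i := by
  unfold bb
  rw [dif_pos (Nat.sub_le _ _), dif_pos h]
  simp only [Nat.sub_sub_self h, min_comm (n p - i) i]

lemma bb_zero (q : ℕ) (n : Fin q → ℕ) (p : Fin q) (i : ℕ) (h : ¬ i ≤ n p) :
    bb q n p i = 0 := by
  unfold bb
  rw [dif_neg h]


/-- If the number `k` of indices `p` with `n_p` odd is even and `k ≥ 2`, then `μ_{N/2} = 0`,
where `N = n₁ + ⋯ + n_q`. -/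
theorem stmt_12 (q : ℕ) (hq : 1 ≤ q) (n : Fin q → ℕ) (hn : ∀ p, 1 ≤ n p)
    (hk : Even (Finset.univ.filter fun p => Odd (n p)).card)
    (hk2 : 2 ≤ (Finset.univ.filter fun p => Odd (n p)).card) :
    muP q n ((∑ p, n p) / 2) = 0 := by
  classical
  have hNeven : Even (∑ p, n p) := (Finset.even_sum_iff_even_card_odd n).2 hk
  obtain ⟨r, hr⟩ := hNeven
  have hsum : ∑ p, n p = (∑ p, n p) / 2 + (∑ p, n p) / 2 := by omega
  set m := (∑ p, n p) / 2 with hm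
  obtain ⟨p₀, hp₀⟩ : ∃ p, Odd (n p) := by
    obtain ⟨p, hp⟩ := Finset.card_pos.mp (lt_of_lt_of_le (by norm_num) hk2)
    exact ⟨p, (Finset.mem_filter.mp hp).2⟩
  unfold muP
  rw [← Finset.sum_filter_of_ne (p := fun a => ∀ p, a p ≤ n p)
    (fun a _ hfa p => by
      by_contra hap
      exact hfa (Finset.prod_eq_zero (Finset.mem_univ p) (bb_zero q n p (a p) hap)))]
  set t := ((Fintype.piFinset fun _ : Fin q => Finset.range (m + 1)).filter
      (fun a => ∑ p, a p = m)).filter (fun a => ∀ p, a p ≤ n p) with ht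
  have hmem : ∀ a ∈ t, (∑ p, a p = m) ∧ ∀ p, a p ≤ n p := by
    intro a ha
    rw [ht, Finset.mem_filter, Finset.mem_filter] at ha
    exact ⟨ha.1.2, ha.2⟩
  have hgsum : ∀ a ∈ t, ∑ p, (n p - a p) = m := by
    intro a ha
    obtain ⟨h1, h2⟩ := hmem a ha
    have : ∑ p, (a p + (n p - a p)) = ∑ p, n p := by
      refine Finset.sum_congr rfl fun p _ => by have := h2 p; omega
    rw [Finset.sum_add_distrib, h1] at this
    omega
  refine Finset.sum_involution (fun a _ => fun p => n p - a p) ?_ ?_ ?_ ?_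
  · intro a ha
    have h2 := (hmem a ha).2
    have : (∏ p, bb q n p (n p - a p)) = ∏ p, bb q n p (a p) :=
      Finset.prod_congr rfl fun p _ => bb_symm q n p (a p) (h2 p)
    rw [this]
    exact CharTwo.add_self_eq_zero _
  · intro a ha _
    intro heq
    have h2 := (hmem a ha).2
    have : n p₀ - a p₀ = a p₀ := congrFun heq p₀
    have : n p₀ = 2 * a p₀ := by have := h2 p₀; omega
    rw [this] at hp₀
    exact Nat.not_odd_iff_even.mpr ⟨a p₀, by omega⟩ hp₀
  · intro a ha
    obtain ⟨h1, h2⟩ := hmem a ha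
    have hg := hgsum a ha
    simp only [ht, Finset.mem_filter, Fintype.mem_piFinset, Finset.mem_range]
    refine ⟨⟨?_, hg⟩, fun p => Nat.sub_le _ _⟩
    intro p
    have : n p - a p ≤ ∑ p', (n p' - a p') :=
      Finset.single_le_sum (f := fun p' => n p' - a p') (fun p' _ => Nat.zero_le _) (Finset.mem_univ p)
    omega
  · intro a ha
    have h2 := (hmem a ha).2
    funext p
    have := h2 p
    simp only
    omega
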